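/- arXiv:1503.07334 — 6 statements merged into one kernel-verified Lean document; each statement's English description precedes it below -/
import Mathlib

section
/- Let H be a finite-dimensional complex Hilbert space, X ⊆ ℂⁿ compact, and T = (T₁,…,Tₙ) a commuting tuple of bounded operators on H. Suppose that for every m ∈ ℕ there exist a finite-dimensional complex Hilbert space K, an isometry V : H → K, and commuting normal operators N = (N₁,…,Nₙ) on K admitting an orthonormal basis of joint eigenvectors whose joint eigenvalue tuples lie in X, such that q(T) = V* q(N) V for every polynomial q of total degree at most m. Then X is a complete polynomial spectral set for T: for every l ∈ ℕ and every l×l matrix Q = (q_{ij}) with entries in ℂ[z₁,…,zₙ], the block operator (q_{ij}(T)) on H ⊕ ⋯ ⊕ H (l summands) satisfies ‖(q_{ij}(T))‖ ≤ sup_{z∈X} ‖(q_{ij}(z))‖, where the right-hand norm is the operator norm on the l×l complex matrix (q_{ij}(z)). -/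
/-!
Take the dilation of degree `max_{i,j} deg Q_ij`. Then `(Q_ij(T)) = W* (Q_ij(N)) W` with
`W = V ⊕ ⋯ ⊕ V` a contraction, so `‖(Q_ij(T))‖ ≤ ‖(Q_ij(N))‖`. Every `Q_ij(N)` is diagonal in the
joint eigenbasis `e` of `N`, with eigenvalue `Q_ij(w_k)` at `e_k`. Regrouping the coordinates of
`K^l` as `⊕_k ℂ^l` (`blockCoord`) turns `(Q_ij(N))` into the orthogonal direct sum of the scalar
matrices `(Q_ij(w_k))`, whose norms are bounded by the supremum over `X` since `w_k ∈ X`.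
-/

/-- Evaluation of a polynomial `q ∈ ℂ[z₁,…,zₙ]` at an (ordered) tuple of elements of a
ℂ-algebra. -/
noncomputable def mvPolyEval {n : ℕ} {A : Type*} [Ring A] [Algebra ℂ A]
    (T : Fin n → A) (q : MvPolynomial (Fin n) ℂ) : A :=
  ∑ m ∈ q.support, q.coeff m • (List.ofFn fun i => T i ^ m i).prod

/-- The block operator on the `l`-fold Hilbert-space direct sum `H ⊕ ⋯ ⊕ H` (modelled as
`PiLp 2`) associated to an `l × l` matrix of operators on `H`. -/
noncomputable def blockOp {l : ℕ} {H : Type*} [NormedAddCommGroup H] [InnerProductSpace ℂ H]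
    (A : Matrix (Fin l) (Fin l) (H →L[ℂ] H)) :
    (PiLp 2 fun _ : Fin l => H) →L[ℂ] (PiLp 2 fun _ : Fin l => H) :=
  ((PiLp.continuousLinearEquiv 2 ℂ fun _ : Fin l => H).symm.toContinuousLinearMap) ∘L
    (ContinuousLinearMap.pi fun i => ∑ j, (A i j) ∘L (ContinuousLinearMap.proj j)) ∘L
    ((PiLp.continuousLinearEquiv 2 ℂ fun _ : Fin l => H).toContinuousLinearMap)

open ContinuousLinearMap MvPolynomial

section Eigenvector

variable {K : Type*} [NormedAddCommGroup K] [NormedSpace ℂ K]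

lemma pow_apply_of_apply_eq_smul {A : K →L[ℂ] K} {c : ℂ} {v : K} (h : A v = c • v) (k : ℕ) :
    (A ^ k) v = c ^ k • v := by
  induction k with
  | zero => simp
  | succ k ih => rw [pow_succ, mul_apply_eq_comp, h, map_smul, ih, smul_smul, pow_succ']

lemma prod_ofFn_apply_of_apply_eq_smul {n : ℕ} {N : Fin n → K →L[ℂ] K} {c : Fin n → ℂ} {v : K}
    (h : ∀ i, N i v = c i • v) : (List.ofFn N).prod v = (∏ i, c i) • v := by
  induction n with
  | zero => simp
  | succ n ih =>
    rw [List.ofFn_succ, List.prod_cons, mul_apply_eq_comp, ih fun i => h i.succ, map_smul, h 0,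
      Fin.prod_univ_succ, smul_smul, mul_comm]

lemma mvPolyEval_apply_of_apply_eq_smul {n : ℕ} {N : Fin n → K →L[ℂ] K} {w : Fin n → ℂ} {v : K}
    (h : ∀ i, N i v = w i • v) (q : MvPolynomial (Fin n) ℂ) :
    mvPolyEval N q v = eval w q • v := by
  rw [mvPolyEval, eval_eq', sum_apply, Finset.sum_smul]
  refine Finset.sum_congr rfl fun d _ => ?_
  rw [smul_apply, prod_ofFn_apply_of_apply_eq_smul fun i => pow_apply_of_apply_eq_smul (h i) (d i),
    smul_smul]

end Eigenvector

lemma OrthonormalBasis.repr_apply_of_apply_eq_smul {ι K : Type*} [Fintype ι]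
    [NormedAddCommGroup K] [InnerProductSpace ℂ K] (e : OrthonormalBasis ι ℂ K)
    {B : K →L[ℂ] K} {d : ι → ℂ} (hB : ∀ k, B (e k) = d k • e k) (v : K) (k : ι) :
    e.repr (B v) k = d k * e.repr v k := by
  classical
  have hBv : B v = ∑ i, (d i * e.repr v i) • e i := by
    conv_lhs => rw [← e.sum_repr v]
    simp only [map_sum, map_smul, hB, smul_smul, mul_comm]
  simp [hBv, Pi.single_apply, e.repr_apply_apply]

lemma PiLp.norm_le_of_forall_norm_apply_le {ι : Type*} [Fintype ι] {β γ : ι → Type*}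
    [∀ i, SeminormedAddCommGroup (β i)] [∀ i, SeminormedAddCommGroup (γ i)] {x : PiLp 2 β}
    {y : PiLp 2 γ} (h : ∀ i, ‖x i‖ ≤ ‖y i‖) : ‖x‖ ≤ ‖y‖ := by
  rw [← pow_le_pow_iff_left₀ (norm_nonneg _) (norm_nonneg _) two_ne_zero,
    PiLp.norm_sq_eq_of_L2, PiLp.norm_sq_eq_of_L2]
  gcongr with i
  exact h i

section BlockOp

variable {l : ℕ}

lemma blockOp_apply {H : Type*} [NormedAddCommGroup H] [InnerProductSpace ℂ H]
    (A : Matrix (Fin l) (Fin l) (H →L[ℂ] H)) (x : PiLp 2 fun _ : Fin l => H) (i : Fin l) :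
    blockOp A x i = ∑ j, A i j (x j) := by
  simp [blockOp, sum_apply]

variable {ι K : Type*} [Fintype ι] [NormedAddCommGroup K] [InnerProductSpace ℂ K]

noncomputable def OrthonormalBasis.blockCoord (e : OrthonormalBasis ι ℂ K)
    (x : PiLp 2 fun _ : Fin l => K) (k : ι) : EuclideanSpace ℂ (Fin l) :=
  WithLp.toLp 2 fun j => e.repr (x j) k

lemma OrthonormalBasis.sum_norm_blockCoord_sq (e : OrthonormalBasis ι ℂ K)
    (x : PiLp 2 fun _ : Fin l => K) : ∑ k, ‖e.blockCoord x k‖ ^ 2 = ‖x‖ ^ 2 := by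
  simp only [blockCoord, PiLp.norm_sq_eq_of_L2]
  rw [Finset.sum_comm]
  refine Finset.sum_congr rfl fun j _ => ?_
  rw [← e.repr.norm_map (x j), PiLp.norm_sq_eq_of_L2]

lemma OrthonormalBasis.blockCoord_blockOp (e : OrthonormalBasis ι ℂ K)
    {B : Matrix (Fin l) (Fin l) (K →L[ℂ] K)} {d : ι → Matrix (Fin l) (Fin l) ℂ}
    (hB : ∀ i j k, B i j (e k) = d k i j • e k) (x : PiLp 2 fun _ : Fin l => K) (k : ι) :
    e.blockCoord (blockOp B x) k = Matrix.toEuclideanCLM (𝕜 := ℂ) (d k) (e.blockCoord x k) := by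
  ext i
  simp [blockCoord, blockOp_apply, Matrix.mulVec, dotProduct,
    e.repr_apply_of_apply_eq_smul (hB i _)]

lemma norm_blockOp_le_of_apply_eq_smul (e : OrthonormalBasis ι ℂ K)
    {B : Matrix (Fin l) (Fin l) (K →L[ℂ] K)} {d : ι → Matrix (Fin l) (Fin l) ℂ}
    (hB : ∀ i j k, B i j (e k) = d k i j • e k) {S : ℝ} (hS : 0 ≤ S)
    (hd : ∀ k, ‖Matrix.toEuclideanCLM (𝕜 := ℂ) (d k)‖ ≤ S) :
    ‖blockOp B‖ ≤ S := by
  refine opNorm_le_bound _ hS fun x => ?_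
  rw [← pow_le_pow_iff_left₀ (norm_nonneg _) (by positivity) two_ne_zero]
  calc ‖blockOp B x‖ ^ 2
      = ∑ k, ‖Matrix.toEuclideanCLM (𝕜 := ℂ) (d k) (e.blockCoord x k)‖ ^ 2 := by
        simp only [← e.sum_norm_blockCoord_sq, e.blockCoord_blockOp hB]
    _ ≤ ∑ k, (S * ‖e.blockCoord x k‖) ^ 2 := by
        gcongr with k
        exact (Matrix.toEuclideanCLM (𝕜 := ℂ) (d k)).le_of_opNorm_le (hd k) _
    _ = (S * ‖x‖) ^ 2 := by
        simp only [mul_pow, ← Finset.mul_sum, e.sum_norm_blockCoord_sq]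

lemma norm_blockOp_adjoint_comp_le {H : Type*} [NormedAddCommGroup H] [InnerProductSpace ℂ H]
    [CompleteSpace H] [CompleteSpace K] {V : H →L[ℂ] K} (hV : ‖V‖ ≤ 1)
    (B : Matrix (Fin l) (Fin l) (K →L[ℂ] K)) :
    ‖blockOp fun i j => adjoint V ∘L B i j ∘L V‖ ≤ ‖blockOp B‖ := by
  refine opNorm_le_bound _ (norm_nonneg _) fun x => ?_
  have hVx : ‖(WithLp.toLp 2 fun i => V (x i) : PiLp 2 fun _ : Fin l => K)‖ ≤ ‖x‖ :=
    PiLp.norm_le_of_forall_norm_apply_le fun i => (V.le_of_opNorm_le hV _).trans_eq (one_mul _)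
  have hcompress : ∀ i, blockOp (fun i j => adjoint V ∘L B i j ∘L V) x i
      = adjoint V (blockOp B (WithLp.toLp 2 fun i => V (x i)) i) := fun i =>
    (blockOp_apply _ x i).trans (by simp [blockOp_apply])
  have hadjoint : ‖adjoint V‖ ≤ 1 := (LinearIsometryEquiv.norm_map adjoint V).trans_le hV
  calc ‖blockOp (fun i j => adjoint V ∘L B i j ∘L V) x‖
      ≤ ‖blockOp B (WithLp.toLp 2 fun i => V (x i))‖ :=
        PiLp.norm_le_of_forall_norm_apply_le fun i => by
          simpa [hcompress] using (adjoint V).le_of_opNorm_le hadjoint _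
    _ ≤ ‖blockOp B‖ * ‖x‖ := (le_opNorm _ _).trans (by gcongr)

end BlockOp

lemma IsCompact.le_biSup {α : Type*} [TopologicalSpace α] {X : Set α} (hX : IsCompact X)
    {f : α → ℝ} (hf : ContinuousOn f X) {z : α} (hz : z ∈ X) : f z ≤ ⨆ z ∈ X, f z :=
  le_ciSup₂ (f := fun z (_ : z ∈ X) => f z) ((hX.image_of_continuousOn hf).bddAbove.mono <|
    Set.iUnion_subset fun _ => Set.range_subset_iff.2 fun hz => Set.mem_image_of_mem f hz) z hz

lemma continuous_norm_toEuclideanCLM_map_eval {n l : ℕ}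
    (Q : Matrix (Fin l) (Fin l) (MvPolynomial (Fin n) ℂ)) :
    Continuous fun z => ‖Matrix.toEuclideanCLM (𝕜 := ℂ) (Q.map (eval z))‖ := by
  have hlin : Continuous (Matrix.toEuclideanCLM (𝕜 := ℂ) (n := Fin l)) :=
    (Matrix.toEuclideanCLM (𝕜 := ℂ) (n := Fin l)).toAlgEquiv.toLinearMap
      |>.continuous_of_finiteDimensional
  exact continuous_norm.comp <| hlin.comp <| continuous_matrix fun i j => continuous_eval (Q i j)

theorem stmt2_general {n : ℕ} {H : Type} [NormedAddCommGroup H] [InnerProductSpace ℂ H]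
    [FiniteDimensional ℂ H]
    (X : Set (Fin n → ℂ)) (hX : IsCompact X)
    (T : Fin n → (H →L[ℂ] H))
    (hdil : ∀ m : ℕ, ∃ (K : Type) (_ : NormedAddCommGroup K) (_ : InnerProductSpace ℂ K)
      (_ : FiniteDimensional ℂ K) (V : H →L[ℂ] K) (N : Fin n → (K →L[ℂ] K))
      (ι : Type) (_ : Fintype ι) (e : OrthonormalBasis ι ℂ K) (w : ι → Fin n → ℂ),
      (∀ x : H, ‖V x‖ = ‖x‖) ∧
      (∀ i j, N i * N j = N j * N i) ∧
      (∀ j, w j ∈ X) ∧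
      (∀ i j, N i (e j) = w j i • e j) ∧
      ∀ q : MvPolynomial (Fin n) ℂ, q.totalDegree ≤ m →
        mvPolyEval T q = ContinuousLinearMap.adjoint V ∘L mvPolyEval N q ∘L V) :
    ∀ (l : ℕ) (Q : Matrix (Fin l) (Fin l) (MvPolynomial (Fin n) ℂ)),
      ‖blockOp (fun i j => mvPolyEval T (Q i j))‖ ≤
        ⨆ z ∈ X, ‖Matrix.toEuclideanCLM (𝕜 := ℂ) (Q.map (MvPolynomial.eval z))‖ := by
  intro l Q
  obtain ⟨K, _, _, _, V, N, ι, _, e, w, hV, -, hw, heig, hcomp⟩ :=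
    hdil (Finset.univ.sup fun p : Fin l × Fin l => (Q p.1 p.2).totalDegree)
  have hdilation : (fun i j => mvPolyEval T (Q i j)) =
      fun i j => adjoint V ∘L mvPolyEval N (Q i j) ∘L V := funext₂ fun i j =>
    hcomp _ (Finset.le_sup (f := fun p : Fin l × Fin l => (Q p.1 p.2).totalDegree)
      (Finset.mem_univ (i, j)))
  have hV_le : ‖V‖ ≤ 1 := opNorm_le_bound _ zero_le_one fun x => by rw [hV, one_mul]
  rw [hdilation]
  refine (norm_blockOp_adjoint_comp_le hV_le _).trans <|
    norm_blockOp_le_of_apply_eq_smul e (d := fun k => Q.map (eval (w k))) (fun i j k => ?_)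
      (Real.iSup_nonneg fun z => Real.iSup_nonneg fun _ => norm_nonneg _)
      fun k => hX.le_biSup (continuous_norm_toEuclideanCLM_map_eval Q).continuousOn (hw k)
  simpa using mvPolyEval_apply_of_apply_eq_smul (fun i => heig i k) (Q i j)

/-- If a commuting tuple `T` of operators on a finite-dimensional Hilbert
space `H` admits, for every `m ∈ ℕ`, a finite-dimensional normal `X`-`m`-dilation (commuting
normal operators with an orthonormal basis of joint eigenvectors whose joint eigenvalue tuples
lie in `X`, compressing correctly for polynomials of total degree ≤ m), then `X` is a complete
polynomial spectral set for `T`: for every `l` and every `l × l` matrix `Q` of polynomials,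
`‖(Q i j (T))‖ ≤ sup_{z ∈ X} ‖(Q i j (z))‖`, where on the right the norm is the operator norm
of the `l × l` complex matrix. -/
theorem stmt2 {n : ℕ} {H : Type} [NormedAddCommGroup H] [InnerProductSpace ℂ H]
    [FiniteDimensional ℂ H]
    (X : Set (Fin n → ℂ)) (hX : IsCompact X)
    (T : Fin n → (H →L[ℂ] H)) (hT : ∀ i j, T i * T j = T j * T i)
    (hdil : ∀ m : ℕ, ∃ (K : Type) (_ : NormedAddCommGroup K) (_ : InnerProductSpace ℂ K)
      (_ : FiniteDimensional ℂ K) (V : H →L[ℂ] K) (N : Fin n → (K →L[ℂ] K))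
      (ι : Type) (_ : Fintype ι) (e : OrthonormalBasis ι ℂ K) (w : ι → Fin n → ℂ),
      (∀ x : H, ‖V x‖ = ‖x‖) ∧
      (∀ i j, N i * N j = N j * N i) ∧
      (∀ j, w j ∈ X) ∧
      (∀ i j, N i (e j) = w j i • e j) ∧
      ∀ q : MvPolynomial (Fin n) ℂ, q.totalDegree ≤ m →
        mvPolyEval T q = ContinuousLinearMap.adjoint V ∘L mvPolyEval N q ∘L V) :
    ∀ (l : ℕ) (Q : Matrix (Fin l) (Fin l) (MvPolynomial (Fin n) ℂ)),
      ‖blockOp (fun i j => mvPolyEval T (Q i j))‖ ≤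
        ⨆ z ∈ X, ‖Matrix.toEuclideanCLM (𝕜 := ℂ) (Q.map (MvPolynomial.eval z))‖ :=
  stmt2_general X hX T hdil
end

section
/- Let N = (N₁,…,Nₙ) be a commuting tuple of bounded normal operators on a complex Hilbert space H (each Nᵢ normal and NᵢN_j = N_jNᵢ for all i, j), and let λ = (λ₁,…,λₙ) ∈ ℂⁿ. Then the operator Σ_{k=1}^{n} (N_k − λ_k)(N_k − λ_k)* is invertible in B(H) if and only if there exist operators B₁,…,Bₙ in the unital C*-algebra generated by N₁,…,Nₙ such that Σ_{k=1}^{n} B_k (N_k − λ_k) = I. -/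
/-!
If `S = Σ Tₖ Tₖ*` is invertible, its inverse lies in every closed star subalgebra containing the
`Tₖ` (spectral permanence), and normality gives `Σ (S⁻¹ Tₖ*) Tₖ = S⁻¹ Σ Tₖ* Tₖ = 1`.
Conversely, if `Σ Bₖ Tₖ = 1`, the C⋆-valued Cauchy–Schwarz inequality in the Hilbert C⋆-module
`Aⁿ`, applied to `(Bₖ)` and `(Tₖ*)`, gives `1 ≤ ‖B‖² Σ Tₖ* Tₖ`, so `Σ Tₖ* Tₖ` is invertible.
-/

open scoped InnerProductSpace

lemma IsStarNormal.sub_smul_one {R A : Type*} [CommSemiring R] [StarRing R] [Ring A]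
    [StarRing A] [Algebra R A] [StarModule R A] {a : A} (ha : IsStarNormal a) (c : R) :
    IsStarNormal (a - c • 1) :=
  Commute.isStarNormal_sub <| by
    simpa only [star_smul, star_one] using (Commute.one_right a).smul_right (star c)

section CStarAlgebra

variable {A : Type*} [CStarAlgebra A] {ι : Type*} [Fintype ι]

lemma exists_sum_mul_eq_one_of_isUnit_sum_mul_star (S : StarSubalgebra ℂ A)
    [IsClosed (S : Set A)] {T : ι → A} (hTS : ∀ i, T i ∈ S) [hT : ∀ i, IsStarNormal (T i)]
    (h : IsUnit (∑ i, T i * star (T i))) :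
    ∃ B : ι → A, (∀ i, B i ∈ S) ∧ ∑ i, B i * T i = 1 := by
  let s : S := ∑ i, ⟨T i, hTS i⟩ * star ⟨T i, hTS i⟩
  obtain ⟨u, hu⟩ := (S.coe_isUnit (a := s)).mp (by simpa [s] using h)
  refine ⟨fun i ↦ (↑u⁻¹ : S) * star (T i), fun i ↦ mul_mem (u⁻¹ : Sˣ).1.2 (star_mem (hTS i)), ?_⟩
  have hinv : ((↑u⁻¹ * s : S) : A) = 1 := by rw [← hu, Units.inv_mul]; rfl
  simpa [s, mul_assoc, Finset.mul_sum, (hT _).star_comm_self.eq] using hinv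

variable [PartialOrder A] [StarOrderedRing A]

lemma one_le_norm_sq_smul_sum_star_mul_self {B T : ι → A} (h : ∑ i, B i * T i = 1) :
    1 ≤ ‖(WithCStarModule.equiv A (ι → A)).symm B‖ ^ 2 • ∑ i, star (T i) * T i := by
  set b := (WithCStarModule.equiv A (ι → A)).symm B
  set t := (WithCStarModule.equiv A (ι → A)).symm (star T)
  have htb : ⟪t, b⟫_A = 1 := by
    simpa [WithCStarModule.pi_inner, WithCStarModule.inner_def, b, t] using h
  have htt : ⟪t, t⟫_A = ∑ i, star (T i) * T i := by
    simp [WithCStarModule.pi_inner, WithCStarModule.inner_def, t]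
  simpa [← htt, ← CStarModule.star_inner t b, htb] using
    CStarModule.inner_mul_inner_swap_le (A := A) (x := b) (y := t)

lemma isUnit_sum_star_mul_self_of_sum_mul_eq_one {B T : ι → A} (h : ∑ i, B i * T i = 1) :
    IsUnit (∑ i, star (T i) * T i) := by
  set c := ‖(WithCStarModule.equiv A (ι → A)).symm B‖ ^ 2
  have hc : IsUnit (c • ∑ i, star (T i) * T i) :=
    CStarAlgebra.isUnit_of_le 1 (one_le_norm_sq_smul_sum_star_mul_self h)
  rw [← smul_one_mul] at hc
  exact (((Commute.one_left _).smul_left c).isUnit_mul_iff.mp hc).2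

end CStarAlgebra

theorem stmt7_general {n : ℕ} {H : Type} [NormedAddCommGroup H] [InnerProductSpace ℂ H]
    [CompleteSpace H]
    (N : Fin n → (H →L[ℂ] H)) (hnormal : ∀ i, IsStarNormal (N i))
    (lam : Fin n → ℂ) :
    IsUnit (∑ k, (N k - lam k • 1) * star (N k - lam k • 1)) ↔
    ∃ B : Fin n → (H →L[ℂ] H),
      (∀ k, B k ∈ (StarAlgebra.adjoin ℂ (Set.range N)).topologicalClosure) ∧
      ∑ k, B k * (N k - lam k • 1) = 1 := by
  set 𝒜 := (StarAlgebra.adjoin ℂ (Set.range N)).topologicalClosure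
  have : ∀ k, IsStarNormal (N k - lam k • 1) := fun k ↦ (hnormal k).sub_smul_one (lam k)
  have : IsClosed (𝒜 : Set (H →L[ℂ] H)) := StarSubalgebra.isClosed_topologicalClosure _
  have hmem : ∀ k, N k - lam k • 1 ∈ 𝒜 := fun k ↦
    sub_mem (StarSubalgebra.le_topologicalClosure _ (StarAlgebra.subset_adjoin ℂ _ ⟨k, rfl⟩))
      (SMulMemClass.smul_mem _ (one_mem _))
  have hsum : ∑ k, star (N k - lam k • 1) * (N k - lam k • 1) =
      ∑ k, (N k - lam k • 1) * star (N k - lam k • 1) :=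
    Finset.sum_congr rfl fun k _ ↦ star_comm_self' _
  refine ⟨exists_sum_mul_eq_one_of_isUnit_sum_mul_star 𝒜 hmem, ?_⟩
  rintro ⟨B, -, hB⟩
  exact hsum ▸ isUnit_sum_star_mul_self_of_sum_mul_eq_one hB

/-- For a commuting tuple `N = (N₁,…,Nₙ)` of bounded normal operators on a
complex Hilbert space `H` and `λ ∈ ℂⁿ`, the operator `Σ_k (N_k − λ_k)(N_k − λ_k)*` is
invertible in `B(H)` if and only if there are operators `B₁,…,Bₙ` in the unital C*-algebra
generated by `N₁,…,Nₙ` (the topological closure of the star subalgebra they generate) with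
`Σ_k B_k (N_k − λ_k) = I`. -/
theorem stmt7 {n : ℕ} {H : Type} [NormedAddCommGroup H] [InnerProductSpace ℂ H]
    [CompleteSpace H]
    (N : Fin n → (H →L[ℂ] H)) (hnormal : ∀ i, IsStarNormal (N i))
    (hcomm : ∀ i j, N i * N j = N j * N i) (lam : Fin n → ℂ) :
    IsUnit (∑ k, (N k - lam k • 1) * star (N k - lam k • 1)) ↔
    ∃ B : Fin n → (H →L[ℂ] H),
      (∀ k, B k ∈ (StarAlgebra.adjoin ℂ (Set.range N)).topologicalClosure) ∧
      ∑ k, B k * (N k - lam k • 1) = 1 :=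
  stmt7_general N hnormal lam
end

section
/- Let B be a d×d complex matrix and let X ⊆ ℂ be a finite nonempty set which is a polynomial spectral set for B, i.e., ‖p(B)‖ ≤ max_{x∈X} |p(x)| for every polynomial p ∈ ℂ[z], where ‖·‖ is the operator norm induced by the Euclidean inner product. Then B is normal: B B* = B* B. -/
/-!
Polynomials vanishing on `X` annihilate `B`, so `p(B)` only depends on `p|_X`. With `ℓ_x` the
Lagrange basis of `X`, this gives `B = ∑ x • E_x` for the idempotents `E_x = ℓ_x(B)`. Since
`|ℓ_x| ≤ 1` on `X`, each `E_x` is a contraction, and a contractive idempotent on a Hilbert space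
is an orthogonal projection. Hence `B* = ∑ conj x • E_x` is again a polynomial in `B`, so it
commutes with `B`.
-/

open Polynomial

section InnerProductSpace

variable {𝕜 E : Type*} [RCLike 𝕜] [NormedAddCommGroup E] [InnerProductSpace 𝕜 E]

theorem inner_eq_zero_of_forall_norm_le_norm_add_smul {x y : E}
    (h : ∀ t : 𝕜, ‖x‖ ≤ ‖x + t • y‖) : inner 𝕜 x y = 0 := by
  -- `0` is the best approximation of `x` in `𝕜 ∙ y`.
  have hmin : ‖x - 0‖ = ⨅ w : 𝕜 ∙ y, ‖x - w‖ := by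
    refine le_antisymm (le_ciInf fun w => ?_) ?_
    · obtain ⟨t, ht⟩ := Submodule.mem_span_singleton.mp w.2
      rw [sub_zero, ← ht, sub_eq_add_neg, ← neg_smul]
      exact h _
    · exact (ciInf_le ⟨0, Set.forall_mem_range.2 fun _ => norm_nonneg _⟩ 0).trans_eq (by simp)
  simpa using (Submodule.norm_eq_iInf_iff_inner_eq_zero (𝕜 ∙ y) (Submodule.zero_mem _)).1 hmin y
    (Submodule.mem_span_singleton_self y)

theorem ContinuousLinearMap.isSelfAdjoint_of_isIdempotentElem_of_norm_le_one [CompleteSpace E]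
    {P : E →L[𝕜] E} (hP : IsIdempotentElem P) (hP1 : ‖P‖ ≤ 1) : IsSelfAdjoint P := by
  rw [isSelfAdjoint_iff_isSymmetric,
    LinearMap.IsIdempotentElem.isSymmetric_iff_isOrtho_range_ker
      (IsIdempotentElem.toLinearMap hP),
    Submodule.isOrtho_iff_inner_eq]
  rintro _ ⟨u, rfl⟩ v hv
  refine inner_eq_zero_of_forall_norm_le_norm_add_smul fun t => ?_
  have hPu : P (P u + t • v) = P u := by
    rw [map_add, map_smul, show P v = 0 from hv, smul_zero, add_zero]
    exact DFunLike.congr_fun hP.eq u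
  calc ‖P u‖ = ‖P (P u + t • v)‖ := by rw [hPu]
    _ ≤ ‖P‖ * ‖P u + t • v‖ := P.le_opNorm _
    _ ≤ ‖P u + t • v‖ := mul_le_of_le_one_left (norm_nonneg _) hP1

end InnerProductSpace

namespace Lagrange

variable {F : Type*} [Field F] [DecidableEq F] {s : Finset F}

theorem eval_basis_id {x y : F} (hx : x ∈ s) (hy : y ∈ s) :
    (Lagrange.basis s id x).eval y = if x = y then 1 else 0 := by
  split_ifs with hxy
  · subst hxy
    exact eval_basis_self (v := id) (Set.injOn_id _) hx
  · exact eval_basis_of_ne (v := id) hxy hy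

variable {A : Type*} [Ring A] [Algebra F A] {a : A}

theorem aeval_eq_sum_eval_smul_aeval_basis
    (hann : ∀ p : F[X], (∀ x ∈ s, p.eval x = 0) → aeval a p = 0) (p : F[X]) :
    aeval a p = ∑ x ∈ s, p.eval x • aeval a (Lagrange.basis s id x) := by
  have hp : aeval a p = aeval a (interpolate s id fun x => p.eval x) := by
    rw [← sub_eq_zero, ← map_sub]
    refine hann _ fun x hx => ?_
    rw [eval_sub, ← id_eq x, eval_interpolate_at_node _ (Set.injOn_id _) hx, id_eq, sub_self]
  simp only [hp, interpolate_apply, map_sum, map_mul, aeval_C, Algebra.smul_def]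

theorem isIdempotentElem_aeval_basis
    (hann : ∀ p : F[X], (∀ x ∈ s, p.eval x = 0) → aeval a p = 0) {x : F} (hx : x ∈ s) :
    IsIdempotentElem (aeval a (Lagrange.basis s id x)) := by
  rw [IsIdempotentElem, ← map_mul, ← sub_eq_zero, ← map_sub]
  refine hann _ fun y hy => ?_
  rw [eval_sub, eval_mul, eval_basis_id hx hy]
  split_ifs <;> simp

theorem isStarNormal_of_isSelfAdjoint_aeval_basis [StarRing F] [StarRing A] [StarModule F A]
    (hann : ∀ p : F[X], (∀ x ∈ s, p.eval x = 0) → aeval a p = 0)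
    (hsa : ∀ x ∈ s, IsSelfAdjoint (aeval a (Lagrange.basis s id x))) : IsStarNormal a := by
  have hstar : star a = aeval a (interpolate s id star) := by
    conv_lhs => rw [← aeval_X (R := F) a]
    rw [aeval_eq_sum_eval_smul_aeval_basis hann, aeval_eq_sum_eval_smul_aeval_basis hann,
      star_sum]
    refine Finset.sum_congr rfl fun x hx => ?_
    rw [star_smul, (hsa x hx).star_eq, eval_X, ← id_eq x,
      eval_interpolate_at_node _ (Set.injOn_id _) hx, id_eq]
  refine ⟨?_⟩
  rw [hstar]
  simpa using ((Commute.all (interpolate s id star) X).map (aeval a))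

end Lagrange

namespace Matrix

variable {n : Type*} [Fintype n] [DecidableEq n]

theorem isSelfAdjoint_of_isIdempotentElem_of_norm_toEuclideanCLM_le_one {𝕜 : Type*} [RCLike 𝕜]
    {P : Matrix n n 𝕜} (hP : IsIdempotentElem P) (hP1 : ‖toEuclideanCLM (𝕜 := 𝕜) P‖ ≤ 1) :
    IsSelfAdjoint P := by
  refine EquivLike.injective (toEuclideanCLM (n := n) (𝕜 := 𝕜)) ?_
  rw [map_star]
  exact ContinuousLinearMap.isSelfAdjoint_of_isIdempotentElem_of_norm_le_one
    (hP.map toEuclideanCLM) hP1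

def IsPolynomialSpectralSet (B : Matrix n n ℂ) (X : Set ℂ) : Prop :=
  ∀ p : Polynomial ℂ, ‖toEuclideanCLM (𝕜 := ℂ) (aeval B p)‖ ≤ ⨆ x ∈ X, ‖p.eval x‖

namespace IsPolynomialSpectralSet

variable {B : Matrix n n ℂ} {X : Set ℂ}

theorem norm_aeval_le (h : B.IsPolynomialSpectralSet X) {p : Polynomial ℂ} {c : ℝ} (hc : 0 ≤ c)
    (hp : ∀ x ∈ X, ‖p.eval x‖ ≤ c) : ‖toEuclideanCLM (𝕜 := ℂ) (aeval B p)‖ ≤ c :=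
  (h p).trans (Real.iSup_le (fun x => Real.iSup_le (hp x) hc) hc)

theorem aeval_eq_zero (h : B.IsPolynomialSpectralSet X) {p : Polynomial ℂ}
    (hp : ∀ x ∈ X, p.eval x = 0) : aeval B p = 0 := by
  have := h.norm_aeval_le le_rfl fun x hx => by rw [hp x hx, norm_zero]
  exact toEuclideanCLM.injective (by simpa using this)

theorem isStarNormal (h : B.IsPolynomialSpectralSet X) (hX : X.Finite) : IsStarNormal B := by
  classical
  have hann : ∀ p : Polynomial ℂ, (∀ x ∈ hX.toFinset, p.eval x = 0) → aeval B p = 0 :=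
    fun p hp => h.aeval_eq_zero fun x hx => hp x (hX.mem_toFinset.2 hx)
  refine Lagrange.isStarNormal_of_isSelfAdjoint_aeval_basis hann fun x hx =>
    isSelfAdjoint_of_isIdempotentElem_of_norm_toEuclideanCLM_le_one
      (Lagrange.isIdempotentElem_aeval_basis hann hx) (h.norm_aeval_le zero_le_one fun y hy => ?_)
  rw [Lagrange.eval_basis_id hx (hX.mem_toFinset.2 hy)]
  split_ifs <;> simp

end IsPolynomialSpectralSet

end Matrix

theorem stmt11_general {d : ℕ} (B : Matrix (Fin d) (Fin d) ℂ) (X : Set ℂ)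
    (hfin : X.Finite)
    (h : ∀ p : Polynomial ℂ,
      ‖Matrix.toEuclideanCLM (𝕜 := ℂ) (Polynomial.aeval B p)‖ ≤
        ⨆ x ∈ X, ‖p.eval x‖) :
    B * B.conjTranspose = B.conjTranspose * B :=
  (Matrix.IsPolynomialSpectralSet.isStarNormal h hfin).star_comm_self.eq.symm

/-- If a finite nonempty set `X ⊆ ℂ` is a polynomial spectral set for a
`d × d` complex matrix `B` (with respect to the ℓ²-operator norm, here expressed via
`Matrix.toEuclideanCLM`), then `B` is normal. -/
theorem stmt11 {d : ℕ} (B : Matrix (Fin d) (Fin d) ℂ) (X : Set ℂ)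
    (hfin : X.Finite) (hne : X.Nonempty)
    (h : ∀ p : Polynomial ℂ,
      ‖Matrix.toEuclideanCLM (𝕜 := ℂ) (Polynomial.aeval B p)‖ ≤
        ⨆ x ∈ X, ‖p.eval x‖) :
    B * B.conjTranspose = B.conjTranspose * B :=
  stmt11_general B X hfin h
end

section
/- Let B be a d×d complex matrix such that ‖p(B)‖ ≤ max(|p(0)|, |p(1)|) for every polynomial p ∈ ℂ[z], where ‖·‖ is the operator norm induced by the Euclidean inner product (i.e., {0,1} is a polynomial spectral set for B). Then B is an orthogonal projection: B² = B and B* = B. -/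
/-!
Since `X² - X` vanishes on `{0, 1}`, the hypothesis forces `B² = B`, and `p = X` gives `‖B‖ ≤ 1`.
A contractive idempotent `T` on an inner product space has its range orthogonal to its kernel:
for `x = T x` and `w ∈ ker T`, `‖x‖ = ‖T (x - w)‖ ≤ ‖x - w‖`, so `0` is the point of `ker T`
nearest to `x`, i.e. `x ⟂ ker T`. An idempotent with `range T ⟂ ker T` is self-adjoint.
-/

open scoped InnerProductSpace

section

variable {𝕜 E : Type*} [RCLike 𝕜] [NormedAddCommGroup E] [InnerProductSpace 𝕜 E]

theorem Submodule.inner_eq_zero_of_forall_norm_le_norm_sub (K : Submodule 𝕜 E) {u : E}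
    (h : ∀ w ∈ K, ‖u‖ ≤ ‖u - w‖) {w : E} (hw : w ∈ K) : ⟪u, w⟫_𝕜 = 0 := by
  have hbdd : BddBelow (Set.range fun w : K => ‖u - w‖) :=
    ⟨0, by rintro - ⟨_, rfl⟩; positivity⟩
  have hmin : ‖u - 0‖ = ⨅ w : K, ‖u - w‖ :=
    le_antisymm (by simpa using le_ciInf fun w : K => h w w.2)
      (by simpa using ciInf_le hbdd 0)
  simpa using (K.norm_eq_iInf_iff_inner_eq_zero K.zero_mem).1 hmin w hw

namespace ContinuousLinearMap

theorem IsIdempotentElem.isOrtho_range_ker_of_norm_le_one {T : E →L[𝕜] E}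
    (hT : IsIdempotentElem T) (hT1 : ‖T‖ ≤ 1) : T.range ⟂ T.ker := by
  rw [Submodule.isOrtho_iff_inner_eq]
  rintro _ ⟨x, rfl⟩ y hy
  refine T.ker.inner_eq_zero_of_forall_norm_le_norm_sub (fun w hw => ?_) hy
  have hTx : T (T x - w) = T x := by
    rw [map_sub, show T w = 0 from hw, sub_zero]
    exact DFunLike.congr_fun hT.eq x
  calc ‖T x‖ = ‖T (T x - w)‖ := by rw [hTx]
    _ ≤ ‖T‖ * ‖T x - w‖ := T.le_opNorm _
    _ ≤ ‖T x - w‖ := mul_le_of_le_one_left (norm_nonneg _) hT1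

theorem IsIdempotentElem.isSelfAdjoint_of_norm_le_one [CompleteSpace E] {T : E →L[𝕜] E}
    (hT : IsIdempotentElem T) (hT1 : ‖T‖ ≤ 1) : IsSelfAdjoint T := by
  rw [isSelfAdjoint_iff_isSymmetric,
    LinearMap.IsIdempotentElem.isSymmetric_iff_isOrtho_range_ker (IsIdempotentElem.toLinearMap hT)]
  exact IsIdempotentElem.isOrtho_range_ker_of_norm_le_one hT hT1

end ContinuousLinearMap

end

/-- If `{0, 1} ⊆ ℂ` is a polynomial spectral set for a `d × d` complex
matrix `B`, i.e. `‖p(B)‖ ≤ max (|p(0)|, |p(1)|)` for every polynomial `p` (with the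
ℓ²-operator norm, here expressed via `Matrix.toEuclideanCLM`), then `B` is an orthogonal
projection: `B² = B` and `B* = B`. -/
theorem stmt12 {d : ℕ} (B : Matrix (Fin d) (Fin d) ℂ)
    (h : ∀ p : Polynomial ℂ,
      ‖Matrix.toEuclideanCLM (𝕜 := ℂ) (Polynomial.aeval B p)‖ ≤
        max ‖p.eval 0‖ ‖p.eval 1‖) :
    B * B = B ∧ B.conjTranspose = B := by
  set φ := Matrix.toEuclideanCLM (n := Fin d) (𝕜 := ℂ)
  have hidem : IsIdempotentElem B := by
    have h0 := h (.X ^ 2 - .X)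
    simp only [map_pow, Polynomial.aeval_X, map_sub, Polynomial.eval_sub,
      Polynomial.eval_pow, Polynomial.eval_X, ne_eq, OfNat.ofNat_ne_zero, not_false_eq_true,
      zero_pow, sub_self, norm_zero, one_pow, max_self, norm_le_zero_iff] at h0
    rwa [← map_pow, ← map_sub, map_eq_zero_iff φ (EquivLike.injective φ), sub_eq_zero, sq] at h0
  have hnorm : ‖φ B‖ ≤ 1 := by simpa using h .X
  have hsa : IsSelfAdjoint (φ B) :=
    ContinuousLinearMap.IsIdempotentElem.isSelfAdjoint_of_norm_le_one (hidem.map φ) hnorm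
  refine ⟨hidem, EquivLike.injective φ ?_⟩
  rw [← Matrix.star_eq_conjTranspose, map_star, hsa.star_eq]
end

section
/- Let H and K be finite-dimensional complex Hilbert spaces, V : H → K an isometry, B = (B₁,…,Bₙ) a commuting tuple of operators on H, and N = (N₁,…,Nₙ) a commuting tuple of normal operators on K such that B₁^{m₁}⋯Bₙ^{mₙ} = V* N₁^{m₁}⋯Nₙ^{mₙ} V for all nonnegative integers m₁,…,mₙ. Then each B_j is normal: B_j B_j* = B_j* B_j for j = 1,…,n. -/
/-!
Since `N` is normal with finite spectrum, `star N = p(N)` for the Lagrange polynomial `p` that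
interpolates complex conjugation on the spectrum of `N`. Compressing polynomials term by term gives
`p(B) = V* p(N) V = V* N* V = B*`, and a polynomial in `B` commutes with `B`.
-/

open Polynomial ContinuousLinearMap

theorem List.prod_ofFn_pow_single {M : Type*} [Monoid M] {n : ℕ} (f : Fin n → M) (j : Fin n)
    (m : ℕ) : (List.ofFn fun i => f i ^ Pi.single j m i).prod = f j ^ m := by
  rw [List.ofFn_eq_map, List.prod_map_eq_pow_single j _ fun i hi _ => by
    rw [Pi.single_eq_of_ne hi, pow_zero], List.count_finRange, pow_one, Pi.single_eq_same]

theorem Polynomial.commute_aeval_self {R A : Type*} [CommSemiring R] [Semiring A] [Algebra R A]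
    (a : A) (p : R[X]) : Commute a (aeval a p) := by
  simpa using (commute_X p).map (aeval a)

theorem exists_aeval_eq_star_of_finite_spectrum {A : Type*} [CStarAlgebra A] (a : A)
    [IsStarNormal a] (ha : (spectrum ℂ a).Finite) : ∃ p : ℂ[X], aeval a p = star a := by
  classical
  refine ⟨Lagrange.interpolate ha.toFinset id star, ?_⟩
  rw [← cfc_polynomial _ a, ← cfc_star_id (R := ℂ) a]
  exact cfc_congr fun z hz =>
    Lagrange.eval_interpolate_at_node (v := id) _ (Set.injOn_id _) (ha.mem_toFinset.2 hz)

theorem ContinuousLinearMap.aeval_eq_comp_of_pow_eq_comp {𝕜 E F : Type*}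
    [NontriviallyNormedField 𝕜] [NormedAddCommGroup E] [NormedSpace 𝕜 E]
    [NormedAddCommGroup F] [NormedSpace 𝕜 F] {S : E →L[𝕜] E} {T : F →L[𝕜] F}
    {W : F →L[𝕜] E} {V : E →L[𝕜] F} (h : ∀ m : ℕ, S ^ m = W ∘L (T ^ m) ∘L V) (p : 𝕜[X]) :
    aeval S p = W ∘L aeval T p ∘L V := by
  induction p using Polynomial.induction_on' with
  | add p q hp hq => rw [map_add, map_add, hp, hq, add_comp, comp_add]
  | monomial m c =>
    rw [aeval_monomial, aeval_monomial, ← Algebra.smul_def, ← Algebra.smul_def, h m, smul_comp,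
      comp_smul]

theorem stmt13_general {n : ℕ} {H K : Type}
    [NormedAddCommGroup H] [InnerProductSpace ℂ H] [FiniteDimensional ℂ H]
    [NormedAddCommGroup K] [InnerProductSpace ℂ K] [FiniteDimensional ℂ K]
    (V : H →L[ℂ] K)
    (B : Fin n → (H →L[ℂ] H))
    (N : Fin n → (K →L[ℂ] K))
    (hNnormal : ∀ i, IsStarNormal (N i))
    (hdil : ∀ m : Fin n → ℕ,
      (List.ofFn fun i => B i ^ m i).prod =
        ContinuousLinearMap.adjoint V ∘L (List.ofFn fun i => N i ^ m i).prod ∘L V) :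
    ∀ j, B j * star (B j) = star (B j) * B j := by
  intro j
  have hpow (m : ℕ) : B j ^ m = adjoint V ∘L (N j ^ m) ∘L V := by
    simpa only [List.prod_ofFn_pow_single] using hdil (Pi.single j m)
  have := hNnormal j
  obtain ⟨p, hp⟩ := exists_aeval_eq_star_of_finite_spectrum (N j)
    (spectrum_eq (f := N j) ▸ Module.End.finite_spectrum _)
  have hstar : star (B j) = aeval (B j) p := by
    rw [aeval_eq_comp_of_pow_eq_comp hpow, hp, ← pow_one (B j), hpow 1, pow_one, star_eq_adjoint,
      adjoint_comp, adjoint_comp, adjoint_adjoint, star_eq_adjoint, ContinuousLinearMap.comp_assoc]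
  rw [hstar]
  exact (commute_aeval_self (B j) p).eq

/-- If a commuting tuple `B` of operators on a finite-dimensional Hilbert
space `H` has a dilation by a commuting tuple `N` of normal operators on a finite-dimensional
Hilbert space `K` (via an isometry `V : H → K`, with all monomials compressing correctly),
then each `B_j` is normal. -/
theorem stmt13 {n : ℕ} {H K : Type}
    [NormedAddCommGroup H] [InnerProductSpace ℂ H] [FiniteDimensional ℂ H]
    [NormedAddCommGroup K] [InnerProductSpace ℂ K] [FiniteDimensional ℂ K]
    (V : H →L[ℂ] K) (hV : ∀ x : H, ‖V x‖ = ‖x‖)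
    (B : Fin n → (H →L[ℂ] H)) (hB : ∀ i j, B i * B j = B j * B i)
    (N : Fin n → (K →L[ℂ] K)) (hNcomm : ∀ i j, N i * N j = N j * N i)
    (hNnormal : ∀ i, IsStarNormal (N i))
    (hdil : ∀ m : Fin n → ℕ,
      (List.ofFn fun i => B i ^ m i).prod =
        ContinuousLinearMap.adjoint V ∘L (List.ofFn fun i => N i ^ m i).prod ∘L V) :
    ∀ j, B j * star (B j) = star (B j) * B j :=
  stmt13_general V B N hNnormal hdil
end

section
/- Let A ∈ M_d(ℂ) be a lower triangular Toeplitz matrix, i.e., there exist a₀,…,a_{d−1} ∈ ℂ with A_{ij} = a_{i−j} for i ≥ j and A_{ij} = 0 for i < j, and suppose A is a contraction (its ℓ²-operator norm is at most 1). Then there exists a function φ holomorphic on the open unit disc 𝔻 with sup_{z∈𝔻} |φ(z)| ≤ 1 whose Taylor coefficients at 0 satisfy φ̂(k) = a_k for k = 0,…,d−1; equivalently, writing S_d for the d×d nilpotent shift matrix ((S_d)_{ij} = 1 if i = j+1, else 0), one has φ(S_d) := Σ_{k=0}^{d−1} φ̂(k) S_d^k = A. -/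
/-!
Schur's algorithm. Identify the lower triangular Toeplitz matrix with symbol `p` with the image
of `p` under the ring homomorphism `toeplitz n : ℂ⟦X⟧ → M_n(ℂ)`, `p ↦ p(S_n)`, and induct on `n`.
The first column of a contraction has norm at most one, so `γ = p(0)` has `‖γ‖ ≤ 1`, and if
`‖γ‖ = 1` then `p ≡ γ` modulo `X ^ n` and the constant `γ` interpolates. If `‖γ‖ < 1`, the
Möbius transform `X * r = (p - γ) / (1 - γ̄ p)` satisfies `p (1 + γ̄ X r) = γ + X r`. The identity
`‖y + γ̄ v‖² - ‖γ y + v‖² = (1 - ‖γ‖²) (‖y‖² - ‖v‖²)`, applied with `v = toeplitz (X * r) y`, shows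
that `toeplitz (X * r)` is again a contraction, hence so is its compression `toeplitz (n - 1) r`.
By induction some Schur function `ψ` interpolates `r`, and the same identity in `ℂ` shows that
`φ = (γ + z ψ) / (1 + γ̄ z ψ)` is a Schur function. Its Taylor series satisfies the same equation
as `p`, and `1 + γ̄ X r` is a unit, so `φ` interpolates `p`.
-/

open Finset PowerSeries Filter Topology Metric
open scoped ContDiff ComplexConjugate Matrix.Norms.L2Operator

lemma Fin.sum_ite_le_mul_ite_le {R : Type*} [Semiring R] {n : ℕ} (f g : ℕ → R) (i j : Fin n) :
    ∑ k : Fin n, (if k ≤ i then f (i - k) else 0) * (if j ≤ k then g (k - j) else 0) =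
      if j ≤ i then ∑ x ∈ antidiagonal ((i : ℕ) - j), f x.1 * g x.2 else 0 := by
  split_ifs with hji
  · symm
    refine Finset.sum_bij_ne_zero
      (fun x hx _ => (⟨j + x.2, by have := mem_antidiagonal.mp hx; omega⟩ : Fin n))
      (fun _ _ _ => mem_univ _) ?_ ?_ ?_
    · intro x hx _ y hy _ h
      have := mem_antidiagonal.mp hx; have := mem_antidiagonal.mp hy
      simp only [Fin.mk.injEq] at h
      ext <;> omega
    · intro k _ hk
      have hki : k ≤ i := by by_contra h; simp [h] at hk
      have hjk : j ≤ k := by by_contra h; simp [h] at hk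
      refine ⟨((i : ℕ) - k, (k : ℕ) - j), mem_antidiagonal.mpr (by omega), ?_, ?_⟩
      · rwa [if_pos hki, if_pos hjk] at hk
      · ext; simp only; omega
    · intro x hx _
      have := mem_antidiagonal.mp hx
      rw [if_pos (by simp only [Fin.le_def]; omega), if_pos (by simp only [Fin.le_def]; omega)]
      congr 2 <;> simp only <;> omega
  · refine Finset.sum_eq_zero fun k _ => ?_
    split_ifs <;> first | simp | omega

namespace PowerSeries

section Semiring
variable {R : Type*} [Semiring R]

variable (R) in
/-- `toeplitz R n p = p(S_n)` for the nilpotent shift `S_n`; its kernel is the ideal `(X ^ n)`. -/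
noncomputable def toeplitz (n : ℕ) : R⟦X⟧ →+* Matrix (Fin n) (Fin n) R where
  toFun p := Matrix.of fun i j => if j ≤ i then coeff ((i : ℕ) - j) p else 0
  map_one' := by
    ext i j
    simp only [Matrix.of_apply, coeff_one, Matrix.one_apply]
    split_ifs <;> first | rfl | omega
  map_mul' p q := by
    ext i j
    simp only [Matrix.of_apply, Matrix.mul_apply, coeff_mul]
    exact (Fin.sum_ite_le_mul_ite_le (coeff · p) (coeff · q) i j).symm
  map_zero' := by ext; simp
  map_add' p q := by
    ext i j
    simp only [Matrix.of_apply, Matrix.add_apply, map_add]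
    split_ifs <;> simp

lemma toeplitz_apply {n : ℕ} (p : R⟦X⟧) (i j : Fin n) :
    toeplitz R n p i j = if j ≤ i then coeff ((i : ℕ) - j) p else 0 := rfl

lemma toeplitz_C {n : ℕ} (a : R) : toeplitz R n (C a) = a • 1 := by
  ext i j
  simp only [toeplitz_apply, coeff_C, Matrix.smul_apply, Matrix.one_apply, smul_eq_mul,
    Fin.ext_iff, Fin.le_def]
  split_ifs <;> first | (exfalso; omega) | simp

lemma toeplitz_eq_toeplitz_iff {n : ℕ} {p q : R⟦X⟧} :
    toeplitz R n p = toeplitz R n q ↔ ∀ k < n, coeff k p = coeff k q := by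
  refine ⟨fun h k hk => ?_, fun h => ?_⟩
  · simpa [toeplitz_apply, Fin.le_def] using congrFun₂ h ⟨k, hk⟩ ⟨0, by omega⟩
  · ext i j
    simp only [toeplitz_apply]
    split_ifs
    · exact h _ (by omega)
    · rfl

lemma toeplitz_X_mul_congr {n : ℕ} {q q' : R⟦X⟧} (h : toeplitz R n q = toeplitz R n q') :
    toeplitz R (n + 1) (X * q) = toeplitz R (n + 1) (X * q') := by
  rw [toeplitz_eq_toeplitz_iff] at h ⊢
  rintro (_ | k) hk
  · simp
  · simpa only [coeff_succ_X_mul] using h k (by omega)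

lemma toeplitz_X_mul_submatrix {n : ℕ} (p : R⟦X⟧) :
    (toeplitz R (n + 1) (X * p)).submatrix Fin.succ Fin.castSucc = toeplitz R n p := by
  ext i j
  simp only [Matrix.submatrix_apply, toeplitz_apply, Fin.le_def, Fin.val_succ, Fin.val_castSucc]
  split_ifs with h₁ h₂ h₂
  · rw [show (i : ℕ) + 1 - j = (i - j : ℕ) + 1 by omega, coeff_succ_X_mul]
  · simp [show (i : ℕ) + 1 - j = 0 by omega]
  · omega
  · rfl

end Semiring

lemma toeplitz_eq_of_mul_one_add_C_mul_eq {R : Type*} [CommRing R] {n : ℕ} {p p' q q' : R⟦X⟧}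
    {a c : R} (hq : constantCoeff q = 0) (hqq' : toeplitz R n q = toeplitz R n q')
    (h : p * (1 + C c * q) = C a + q) (h' : p' * (1 + C c * q') = C a + q') :
    toeplitz R n p = toeplitz R n p' := by
  have hu : IsUnit (toeplitz R n (1 + C c * q)) :=
    (isUnit_iff_constantCoeff.mpr (by simp [hq])).map _
  have hu' : toeplitz R n (1 + C c * q') = toeplitz R n (1 + C c * q) := by
    simp only [map_add, map_mul, hqq']
  refine hu.mul_left_injective ?_
  calc toeplitz R n p * toeplitz R n (1 + C c * q) = toeplitz R n (C a + q) := by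
        rw [← map_mul, h]
    _ = toeplitz R n (C a + q') := by rw [map_add, map_add, hqq']
    _ = toeplitz R n p' * toeplitz R n (1 + C c * q) := by rw [← hu', ← map_mul, h']

/-- For `c = conj (p 0)` this is one step of Schur's algorithm: `X * r` is the Möbius transform
`(p - p 0) / (1 - c p)` of `p`. -/
lemma exists_mul_one_add_C_mul_X_mul_eq {K : Type*} [Field K] (p : K⟦X⟧) {c : K}
    (hc : c * constantCoeff p ≠ 1) :
    ∃ r, p * (1 + C c * (X * r)) = C (constantCoeff p) + X * r := by
  set u := 1 - C c * p
  have hu : constantCoeff u ≠ 0 := by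
    simpa only [u, map_sub, map_one, map_mul, constantCoeff_C] using sub_ne_zero.mpr hc.symm
  obtain ⟨r, hr⟩ : X ∣ (p - C (constantCoeff p)) * u⁻¹ := X_dvd_iff.mpr (by simp)
  refine ⟨r, ?_⟩
  have hqu : X * r * u = p - C (constantCoeff p) := by
    rw [← hr, mul_assoc, PowerSeries.inv_mul_cancel _ hu, mul_one]
  linear_combination (-1 : K⟦X⟧) * hqu

end PowerSeries

namespace Matrix
variable {𝕜 m n m' n' : Type*} [RCLike 𝕜] [Fintype m] [Fintype n] [Fintype m'] [Fintype n']
  [DecidableEq n]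

lemma l2_opNorm_one_submatrix_le [DecidableEq m] {f : m' → m} (hf : Function.Injective f) :
    ‖(1 : Matrix m m 𝕜).submatrix f id‖ ≤ 1 := by
  rw [l2_opNorm_def]
  refine ContinuousLinearMap.opNorm_le_bound _ zero_le_one fun x => ?_
  rw [one_mul]
  refine (sq_le_sq₀ (norm_nonneg _) (norm_nonneg _)).mp ?_
  simp only [LinearEquiv.trans_apply, LinearMap.coe_toContinuousLinearMap', toLpLin_apply,
    EuclideanSpace.norm_sq_eq]
  have hmul : ∀ i, ((1 : Matrix m m 𝕜).submatrix f id *ᵥ x.ofLp) i = x.ofLp (f i) := by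
    simp [mulVec, dotProduct, one_apply]
  simp only [hmul]
  exact (sum_map univ ⟨f, hf⟩ fun i => ‖x.ofLp i‖ ^ 2).symm.trans_le
    (sum_le_univ_sum_of_nonneg fun _ => by positivity)

lemma l2_opNorm_submatrix_le [DecidableEq m] [DecidableEq n'] (A : Matrix m n 𝕜) {f : m' → m}
    {g : n' → n} (hf : Function.Injective f) (hg : Function.Injective g) :
    ‖A.submatrix f g‖ ≤ ‖A‖ := by
  set P := (1 : Matrix m m 𝕜).submatrix f id
  set Q := ((1 : Matrix n n 𝕜).submatrix g id)ᴴ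
  have hfactor : A.submatrix f g = P * A * Q := by
    ext i j
    simp [P, Q, mul_apply, one_apply]
  have hQ : ‖Q‖ ≤ 1 := by
    rw [l2_opNorm_conjTranspose]
    exact l2_opNorm_one_submatrix_le hg
  calc ‖A.submatrix f g‖ ≤ ‖P‖ * ‖A‖ * ‖Q‖ := by
        rw [hfactor]
        exact (l2_opNorm_mul _ _).trans (by gcongr; exact l2_opNorm_mul _ _)
    _ ≤ 1 * ‖A‖ * 1 := by gcongr; exact l2_opNorm_one_submatrix_le hf
    _ = ‖A‖ := by ring

lemma sum_norm_sq_apply_le_l2_opNorm_sq (A : Matrix m n 𝕜) (j : n) :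
    ∑ i, ‖A i j‖ ^ 2 ≤ ‖A‖ ^ 2 := by
  have h := A.l2_opNorm_mulVec (EuclideanSpace.single j 1)
  rw [PiLp.norm_single, norm_one, mul_one] at h
  have hcol : A *ᵥ (EuclideanSpace.single j (1 : 𝕜)).ofLp = fun i => A i j := by
    ext i; simp [mulVec, dotProduct]
  rw [hcol] at h
  have := pow_le_pow_left₀ (norm_nonneg _) h 2
  rwa [EuclideanSpace.norm_sq_eq] at this

end Matrix

section InnerProductSpace
variable {𝕜 E : Type*} [RCLike 𝕜] [NormedAddCommGroup E] [InnerProductSpace 𝕜 E]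

lemma norm_add_conj_smul_sq_sub_norm_smul_add_sq (γ : 𝕜) (y v : E) :
    ‖y + conj γ • v‖ ^ 2 - ‖γ • y + v‖ ^ 2 = (1 - ‖γ‖ ^ 2) * (‖y‖ ^ 2 - ‖v‖ ^ 2) := by
  rw [norm_add_sq (𝕜 := 𝕜), norm_add_sq (𝕜 := 𝕜), inner_smul_right, inner_smul_left,
    norm_smul, norm_smul]
  simp [mul_pow]
  ring

lemma norm_add_div_one_add_conj_mul_le_one {γ w : 𝕜} (hγ : ‖γ‖ ≤ 1) (hw : ‖w‖ ≤ 1) :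
    ‖(γ + w) / (1 + conj γ * w)‖ ≤ 1 := by
  have h := norm_add_conj_smul_sq_sub_norm_smul_add_sq γ (1 : 𝕜) w
  simp only [smul_eq_mul, mul_one, norm_one, one_pow] at h
  have hsq : ‖γ + w‖ ^ 2 ≤ ‖1 + conj γ * w‖ ^ 2 := by
    nlinarith [mul_nonneg (sub_nonneg.mpr (pow_le_one₀ (n := 2) (norm_nonneg γ) hγ))
      (sub_nonneg.mpr (pow_le_one₀ (n := 2) (norm_nonneg w) hw))]
  rw [norm_div]
  exact div_le_one_of_le₀
    ((pow_le_pow_iff_left₀ (norm_nonneg _) (norm_nonneg _) two_ne_zero).mp hsq) (norm_nonneg _)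

lemma ContinuousLinearMap.opNorm_le_one_of_mul_one_add_conj_smul_eq {T C : E →L[𝕜] E} {γ : 𝕜}
    (hγ : ‖γ‖ < 1) (hT : ‖T‖ ≤ 1) (h : T * (1 + conj γ • C) = γ • 1 + C) : ‖C‖ ≤ 1 := by
  refine opNorm_le_bound _ zero_le_one fun y => ?_
  have hTy : T (y + conj γ • C y) = γ • y + C y := by
    simpa using congr($h y)
  have hle : ‖γ • y + C y‖ ≤ ‖y + conj γ • C y‖ := by
    simpa [← hTy] using T.le_of_opNorm_le hT (y + conj γ • C y)
  have key := norm_add_conj_smul_sq_sub_norm_smul_add_sq γ y (C y)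
  have hγ' : 0 < 1 - ‖γ‖ ^ 2 := by nlinarith [norm_nonneg γ]
  have : ‖C y‖ ^ 2 ≤ ‖y‖ ^ 2 := by nlinarith [norm_nonneg (γ • y + C y)]
  rw [one_mul]
  exact (pow_le_pow_iff_left₀ (norm_nonneg _) (norm_nonneg _) two_ne_zero).mp this

end InnerProductSpace

lemma Matrix.l2_opNorm_le_one_of_mul_one_add_conj_smul_eq {𝕜 n : Type*} [RCLike 𝕜] [Fintype n]
    [DecidableEq n] {A C : Matrix n n 𝕜} {γ : 𝕜} (hγ : ‖γ‖ < 1) (hA : ‖A‖ ≤ 1)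
    (h : A * (1 + conj γ • C) = γ • 1 + C) : ‖C‖ ≤ 1 :=
  ContinuousLinearMap.opNorm_le_one_of_mul_one_add_conj_smul_eq
    (T := toEuclideanCLM (n := n) (𝕜 := 𝕜) A) (C := toEuclideanCLM (n := n) (𝕜 := 𝕜) C) hγ hA
    (by simpa using congrArg (toEuclideanCLM (n := n) (𝕜 := 𝕜)) h)

namespace PowerSeries
variable {𝕜 : Type*} [RCLike 𝕜] {n : ℕ} {p : 𝕜⟦X⟧}

lemma sum_norm_coeff_sq_le_one_of_norm_toeplitz_le_one (hp : ‖toeplitz 𝕜 (n + 1) p‖ ≤ 1) :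
    ∑ k ∈ range (n + 1), ‖coeff k p‖ ^ 2 ≤ 1 := by
  have h := (toeplitz 𝕜 (n + 1) p).sum_norm_sq_apply_le_l2_opNorm_sq 0
  simp only [toeplitz_apply, Fin.zero_le, if_true, Fin.val_zero, Nat.sub_zero] at h
  rw [← Fin.sum_univ_eq_sum_range (fun k => ‖coeff k p‖ ^ 2)]
  exact h.trans (pow_le_one₀ (norm_nonneg _) hp)

lemma norm_constantCoeff_le_one_of_norm_toeplitz_le_one (hp : ‖toeplitz 𝕜 (n + 1) p‖ ≤ 1) :
    ‖constantCoeff p‖ ≤ 1 := by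
  have h := sum_norm_coeff_sq_le_one_of_norm_toeplitz_le_one hp
  rw [sum_range_succ', coeff_zero_eq_constantCoeff_apply] at h
  exact (sq_le_one_iff₀ (norm_nonneg _)).mp
    (le_of_add_le_of_nonneg_right h (sum_nonneg fun _ _ => by positivity))

lemma toeplitz_eq_toeplitz_C_of_norm_constantCoeff_eq_one (hp : ‖toeplitz 𝕜 (n + 1) p‖ ≤ 1)
    (h1 : ‖constantCoeff p‖ = 1) :
    toeplitz 𝕜 (n + 1) p = toeplitz 𝕜 (n + 1) (C (constantCoeff p)) := by
  have hsum := sum_norm_coeff_sq_le_one_of_norm_toeplitz_le_one hp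
  rw [sum_range_succ', coeff_zero_eq_constantCoeff_apply, h1, one_pow, add_le_iff_nonpos_left]
    at hsum
  have hzero := (sum_eq_zero_iff_of_nonneg fun _ _ => by positivity).mp
    (le_antisymm hsum (sum_nonneg fun _ _ => by positivity))
  rw [toeplitz_eq_toeplitz_iff]
  rintro (_ | k) hk
  · simp
  · simpa [coeff_C] using hzero k (mem_range.mpr (by omega))

end PowerSeries

section TaylorSeries
variable {𝕜 : Type*} [NontriviallyNormedField 𝕜]

noncomputable def taylorSeries (f : 𝕜 → 𝕜) : 𝕜⟦X⟧ :=
  PowerSeries.mk fun k => iteratedDeriv k f 0 / k.factorial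

lemma coeff_taylorSeries (f : 𝕜 → 𝕜) (k : ℕ) :
    coeff k (taylorSeries f) = iteratedDeriv k f 0 / k.factorial :=
  coeff_mk _ _

lemma taylorSeries_congr {f g : 𝕜 → 𝕜} (h : f =ᶠ[𝓝 0] g) : taylorSeries f = taylorSeries g := by
  ext k
  rw [coeff_taylorSeries, coeff_taylorSeries, h.iteratedDeriv_eq]

@[simp]
lemma taylorSeries_const (c : 𝕜) : taylorSeries (fun _ => c) = C c := by
  ext k
  rw [coeff_taylorSeries, iteratedDeriv_const, coeff_C]
  split_ifs <;> simp_all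

@[simp]
lemma taylorSeries_id : taylorSeries (fun z : 𝕜 => z) = X := by
  ext k
  rw [coeff_taylorSeries, iteratedDeriv_fun_id_zero, coeff_X]
  split_ifs <;> simp_all

lemma taylorSeries_add {f g : 𝕜 → 𝕜} (hf : ContDiffAt 𝕜 ∞ f 0) (hg : ContDiffAt 𝕜 ∞ g 0) :
    taylorSeries (fun z => f z + g z) = taylorSeries f + taylorSeries g := by
  ext k
  simp only [coeff_taylorSeries, map_add, add_div, iteratedDeriv_fun_add
    (hf.of_le (by exact_mod_cast le_top)) (hg.of_le (by exact_mod_cast le_top))]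

lemma taylorSeries_mul [CharZero 𝕜] {f g : 𝕜 → 𝕜} (hf : ContDiffAt 𝕜 ∞ f 0)
    (hg : ContDiffAt 𝕜 ∞ g 0) :
    taylorSeries (fun z => f z * g z) = taylorSeries f * taylorSeries g := by
  ext k
  simp only [coeff_taylorSeries, coeff_mul, Nat.sum_antidiagonal_eq_sum_range_succ_mk, sum_div,
    iteratedDeriv_fun_mul (hf.of_le (by exact_mod_cast le_top))
      (hg.of_le (by exact_mod_cast le_top))]
  refine sum_congr rfl fun i hi => ?_
  have hik : i ≤ k := Nat.lt_succ_iff.mp (mem_range.mp hi)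
  have hfact : (k.choose i : 𝕜) * i.factorial * (k - i).factorial = k.factorial := by
    exact_mod_cast Nat.choose_mul_factorial_mul_factorial hik
  have hchoose : (k.choose i : 𝕜) ≠ 0 := Nat.cast_ne_zero.mpr (Nat.choose_pos hik).ne'
  rw [← hfact]
  field_simp

end TaylorSeries

def SchurClass (φ : ℂ → ℂ) : Prop :=
  DifferentiableOn ℂ φ (ball 0 1) ∧ ∀ z ∈ ball (0 : ℂ) 1, ‖φ z‖ ≤ 1

lemma schurClass_const {γ : ℂ} (hγ : ‖γ‖ ≤ 1) : SchurClass fun _ => γ :=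
  ⟨differentiableOn_const γ, fun _ _ => hγ⟩

noncomputable def invSchurTransform (γ : ℂ) (ψ : ℂ → ℂ) (z : ℂ) : ℂ :=
  (γ + z * ψ z) / (1 + conj γ * (z * ψ z))

namespace SchurClass
variable {γ : ℂ} {ψ : ℂ → ℂ}

lemma contDiffAt (hψ : SchurClass ψ) : ContDiffAt ℂ ∞ ψ 0 :=
  (hψ.1.contDiffOn isOpen_ball).contDiffAt (ball_mem_nhds 0 one_pos)

lemma one_add_conj_mul_ne_zero (hψ : SchurClass ψ) (hγ : ‖γ‖ < 1) {z : ℂ}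
    (hz : z ∈ ball (0 : ℂ) 1) : 1 + conj γ * (z * ψ z) ≠ 0 := by
  have hz' : ‖z‖ < 1 := by simpa using hz
  have : ‖conj γ * (z * ψ z)‖ < 1 := by
    rw [norm_mul, norm_mul, RCLike.norm_conj]
    calc ‖γ‖ * (‖z‖ * ‖ψ z‖) ≤ ‖γ‖ * ‖z‖ := by
          gcongr; exact mul_le_of_le_one_right (norm_nonneg z) (hψ.2 z hz)
      _ < 1 := by nlinarith [norm_nonneg γ, norm_nonneg z]
  intro h
  rw [add_eq_zero_iff_eq_neg'.mp h, norm_neg, norm_one] at this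
  exact lt_irrefl 1 this

lemma invSchurTransform (hψ : SchurClass ψ) (hγ : ‖γ‖ < 1) :
    SchurClass (invSchurTransform γ ψ) := by
  have hw : DifferentiableOn ℂ (fun z => z * ψ z) (ball 0 1) := differentiableOn_id.mul hψ.1
  refine ⟨((differentiableOn_const γ).add hw).div ((differentiableOn_const 1).add
    ((differentiableOn_const _).mul hw)) fun z hz => hψ.one_add_conj_mul_ne_zero hγ hz,
    fun z hz => norm_add_div_one_add_conj_mul_le_one hγ.le ?_⟩
  rw [norm_mul]
  exact mul_le_one₀ (by simpa using (mem_ball_zero_iff.mp hz).le) (norm_nonneg _) (hψ.2 z hz)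

end SchurClass

lemma taylorSeries_invSchurTransform_mul {γ : ℂ} {ψ : ℂ → ℂ} (hψ : SchurClass ψ)
    (hγ : ‖γ‖ < 1) :
    taylorSeries (invSchurTransform γ ψ) * (1 + C (conj γ) * (X * taylorSeries ψ)) =
      C γ + X * taylorSeries ψ := by
  have hw : ContDiffAt ℂ ∞ (fun z => z * ψ z) 0 := contDiffAt_id.mul hψ.contDiffAt
  have hw' : ContDiffAt ℂ ∞ (fun z => conj γ * (z * ψ z)) 0 := contDiffAt_const.mul hw
  have hprod : (fun z => invSchurTransform γ ψ z * (1 + conj γ * (z * ψ z))) =ᶠ[𝓝 0]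
      fun z => γ + z * ψ z :=
    eventually_of_mem (ball_mem_nhds 0 one_pos) fun z hz =>
      div_mul_cancel₀ _ (hψ.one_add_conj_mul_ne_zero hγ hz)
  have hXψ : taylorSeries (fun z => z * ψ z) = X * taylorSeries ψ := by
    rw [taylorSeries_mul contDiffAt_fun_id hψ.contDiffAt, taylorSeries_id]
  have hden : taylorSeries (fun z => 1 + conj γ * (z * ψ z)) =
      1 + C (conj γ) * (X * taylorSeries ψ) := by
    rw [taylorSeries_add contDiffAt_const hw', taylorSeries_mul contDiffAt_const hw, hXψ,
      taylorSeries_const, taylorSeries_const, map_one]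
  have hnum : taylorSeries (fun z => γ + z * ψ z) = C γ + X * taylorSeries ψ := by
    rw [taylorSeries_add contDiffAt_const hw, hXψ, taylorSeries_const]
  rw [← hden, ← hnum, ← taylorSeries_mul (hψ.invSchurTransform hγ).contDiffAt
    (contDiffAt_const.add hw'), taylorSeries_congr hprod]

theorem exists_schurClass_toeplitz_taylorSeries_eq (n : ℕ) (p : ℂ⟦X⟧)
    (hp : ‖toeplitz ℂ n p‖ ≤ 1) :
    ∃ φ, SchurClass φ ∧ toeplitz ℂ n (taylorSeries φ) = toeplitz ℂ n p := by
  induction n generalizing p with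
  | zero => exact ⟨fun _ => 0, schurClass_const (by simp), Subsingleton.elim _ _⟩
  | succ n ih =>
    set γ := constantCoeff p
    obtain hγ | hγ := (norm_constantCoeff_le_one_of_norm_toeplitz_le_one hp).eq_or_lt
    · refine ⟨fun _ => γ, schurClass_const hγ.le, ?_⟩
      rw [taylorSeries_const, toeplitz_eq_toeplitz_C_of_norm_constantCoeff_eq_one hp hγ]
    have hγγ : conj γ * γ ≠ 1 := by
      rw [Complex.conj_mul']
      exact_mod_cast (pow_lt_one₀ (norm_nonneg γ) hγ two_ne_zero).ne
    obtain ⟨r, hr⟩ := exists_mul_one_add_C_mul_X_mul_eq p hγγ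
    have hpr : toeplitz ℂ (n + 1) p * (1 + conj γ • toeplitz ℂ (n + 1) (X * r)) =
        γ • 1 + toeplitz ℂ (n + 1) (X * r) := by
      simpa [toeplitz_C, smul_mul_assoc] using congrArg (toeplitz ℂ (n + 1)) hr
    have hr1 : ‖toeplitz ℂ n r‖ ≤ 1 := by
      rw [← toeplitz_X_mul_submatrix]
      exact (Matrix.l2_opNorm_submatrix_le _ (Fin.succ_injective _)
        (Fin.castSucc_injective _)).trans
        (Matrix.l2_opNorm_le_one_of_mul_one_add_conj_smul_eq hγ hp hpr)
    obtain ⟨ψ, hψ, hψr⟩ := ih r hr1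
    exact ⟨invSchurTransform γ ψ, hψ.invSchurTransform hγ,
      toeplitz_eq_of_mul_one_add_C_mul_eq (by simp) (toeplitz_X_mul_congr hψr)
        (taylorSeries_invSchurTransform_mul hψ hγ) hr⟩

/-- Carathéodory–Schur interpolation. Let `A ∈ M_d(ℂ)` be the lower
triangular Toeplitz matrix with entries `A i j = a_{i−j}` for `i ≥ j` and `0` otherwise,
and suppose `A` is a contraction in the ℓ²-operator norm (expressed via
`Matrix.toEuclideanCLM`).  Then there is a holomorphic function `φ` on the open unit disc,
bounded by `1`, whose Taylor coefficients at `0` satisfy `φ̂(k) = a_k` for `k = 0,…,d−1`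
(the `k`-th Taylor coefficient being `iteratedDeriv k φ 0 / k!`). -/
theorem stmt14 {d : ℕ} (a : Fin d → ℂ) (A : Matrix (Fin d) (Fin d) ℂ)
    (hA : ∀ i j : Fin d, A i j =
      if h : (j : ℕ) ≤ (i : ℕ) then
        a ⟨(i : ℕ) - (j : ℕ), Nat.lt_of_le_of_lt (Nat.sub_le _ _) i.isLt⟩
      else 0)
    (hcontr : ‖Matrix.toEuclideanCLM (𝕜 := ℂ) A‖ ≤ 1) :
    ∃ φ : ℂ → ℂ,
      DifferentiableOn ℂ φ (Metric.ball 0 1) ∧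
      (∀ z ∈ Metric.ball (0 : ℂ) 1, ‖φ z‖ ≤ 1) ∧
      ∀ k : Fin d, iteratedDeriv (k : ℕ) φ 0 = (Nat.factorial (k : ℕ) : ℂ) * a k := by
  set p : ℂ⟦X⟧ := PowerSeries.mk fun k => if h : k < d then a ⟨k, h⟩ else 0
  have hAp : A = toeplitz ℂ d p := by
    ext i j
    rw [hA, toeplitz_apply, coeff_mk]
    split_ifs <;> first | rfl | (exfalso; omega)
  obtain ⟨φ, hφ, hφp⟩ := exists_schurClass_toeplitz_taylorSeries_eq d p (hAp ▸ hcontr)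
  refine ⟨φ, hφ.1, hφ.2, fun k => ?_⟩
  have hk := toeplitz_eq_toeplitz_iff.mp hφp k k.isLt
  rw [coeff_taylorSeries, coeff_mk, dif_pos k.isLt,
    div_eq_iff (Nat.cast_ne_zero.mpr k.val.factorial_ne_zero)] at hk
  rw [hk, mul_comm]
end
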